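/- Assume ℓ(x) = √(2(f(x) − f̲)) where f satisfies assumptions (A) and (B) with 𝔐 = {f = f̲}, assume (H) holds for ℓ, and assume there exist c, r > 0 and β ∈ (0, 3/2) such that ℓ(x) ≥ c · dist(x,𝔐)^β whenever dist(x,𝔐) ≤ r. Then for every x ∈ ℝⁿ and every optimal control α* for x the hitting time t_x(α*) is finite; moreover there exist constants C > 0 and r₀ > 0 such that whenever dist(x,𝔐) ≤ r₀, one has t_x(α*) ≤ (C / (1 − 2β/3)) · dist(x,𝔐)^{3/2 − β}. -/

import Mathlib

/-!
Going straight to a nearest point of `𝔐` shows `v ≤ K · dist(·, 𝔐)^{3/2}`, because the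
Lipschitz bound gives `ℓ ≤ √(2 C₁ dist(·, 𝔐))`. Along an optimal trajectory `y` the remaining
cost `g(t) = v(x) - ∫₀ᵗ ℓ(y)` is at most `v(y(t))` (dynamic programming) and stays positive
before the hitting time. So `dist(y(t), 𝔐) ≥ (g(t)/K)^{2/3}`, and the growth bound
`ℓ ≥ c · dist^β` (with (H) far from `𝔐`) turns `g' = -ℓ(y)` into `g' ≤ -A g^{2β/3}`. As
`2β/3 < 1`, the power `g^{1 - 2β/3}` decreases at least linearly, which bounds the time spent
outside `𝔐` by `g(0)^{1 - 2β/3} / (A (1 - 2β/3)) ≲ dist(x, 𝔐)^{3/2 - β}`. If `𝔐` were never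
reached, the running cost would converge to `v(x)`, so `g` would eventually become small enough
for this estimate, contradicting an infinite hitting time.
-/

open MeasureTheory Filter Metric Set Topology
open scoped ENNReal

noncomputable section

/-- `n`-dimensional Euclidean space. -/
abbrev Euc (n : ℕ) := EuclideanSpace ℝ (Fin n)

variable {n : ℕ}

/-- Trajectory of the control system `ẏ = α`, `y 0 = x`. -/
def traj (x : Euc n) (α : ℝ → Euc n) (t : ℝ) : Euc n :=
  x + ∫ s in Set.Ioc (0 : ℝ) t, α s

/-- An admissible control: measurable with `‖α s‖ ≤ 1` for a.e. `s ≥ 0`. -/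
def Admissible (α : ℝ → Euc n) : Prop :=
  Measurable α ∧ ∀ᵐ s ∂(volume : Measure ℝ), 0 ≤ s → ‖α s‖ ≤ 1

/-- Hitting time `t_x(α) = inf {s ≥ 0 : y_x^α(s) ∈ M}` (`∞` if the set is empty). -/
def hitTime (M : Set (Euc n)) (x : Euc n) (α : ℝ → Euc n) : ℝ≥0∞ :=
  ⨅ (s : ℝ) (_ : 0 ≤ s) (_ : traj x α s ∈ M), ENNReal.ofReal s

/-- Cost `∫₀^{t_x(α)} ℓ(y_x^α(s)) ds` of a control (as an extended real, `ℓ ≥ 0`). -/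
def cost (M : Set (Euc n)) (l : Euc n → ℝ) (x : Euc n) (α : ℝ → Euc n) : ℝ≥0∞ :=
  ∫⁻ s in {s : ℝ | 0 < s ∧ ENNReal.ofReal s < hitTime M x α},
    ENNReal.ofReal (l (traj x α s))

/-- The value function (extended-real valued). -/
def valE (M : Set (Euc n)) (l : Euc n → ℝ) (x : Euc n) : ℝ≥0∞ :=
  ⨅ (α : ℝ → Euc n) (_ : Admissible α), cost M l x α

/-- The value function `v`. -/
def val (M : Set (Euc n)) (l : Euc n → ℝ) (x : Euc n) : ℝ := (valE M l x).toReal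

/-- A control is optimal for `x` if it is admissible and attains the infimum. -/
def IsOptimal (M : Set (Euc n)) (l : Euc n → ℝ) (x : Euc n) (α : ℝ → Euc n) : Prop :=
  Admissible α ∧ cost M l x α = valE M l x

/-- The viscosity subdifferential `D⁻v(z)`. -/
def subDiff (v : Euc n → ℝ) (z : Euc n) : Set (Euc n) :=
  {p | ∀ ε > 0, ∀ᶠ x in 𝓝 z, v z + (inner ℝ p (x - z) : ℝ) - ε * ‖x - z‖ ≤ v x}

/-- The viscosity superdifferential `D⁺v(z)`. -/
def superDiff (v : Euc n → ℝ) (z : Euc n) : Set (Euc n) :=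
  {p | ∀ ε > 0, ∀ᶠ x in 𝓝 z, v x ≤ v z + (inner ℝ p (x - z) : ℝ) + ε * ‖x - z‖}

/-- The set of limiting gradients `D*v(z)`. -/
def limGrad (v : Euc n → ℝ) (z : Euc n) : Set (Euc n) :=
  {p | ∃ u : ℕ → Euc n, (∀ k, DifferentiableAt ℝ v (u k)) ∧
    Tendsto u atTop (𝓝 z) ∧ Tendsto (fun k => gradient v (u k)) atTop (𝓝 p)}

/-- Distance of the trajectory to the target, with the trajectory extended so that it
remains in `M` after the hitting time. -/
def extDist (M : Set (Euc n)) (x : Euc n) (α : ℝ → Euc n) (t : ℝ) : ℝ :=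
  if ENNReal.ofReal t < hitTime M x α then Metric.infDist (traj x α t) M else 0

end

/-- The target set `𝔐 = argmin f` for the eikonal problem arising from `f`. -/
def MOf {n : ℕ} (f : Euc n → ℝ) (flo : ℝ) : Set (Euc n) := {z | f z = flo}

/-- The running cost `ℓ(x) = √(2(f(x) - f̲))`. -/
noncomputable def lOf {n : ℕ} (f : Euc n → ℝ) (flo : ℝ) (z : Euc n) : ℝ :=
  Real.sqrt (2 * (f z - flo))

variable {n : ℕ}

section Trajectory

variable {x : Euc n} {α : ℝ → Euc n}

theorem Admissible.ae_norm_le_one (hα : Admissible α) {a b : ℝ} (ha : 0 ≤ a) :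
    ∀ᵐ s ∂(volume.restrict (Ioc a b)), ‖α s‖ ≤ 1 := by
  refine (ae_restrict_iff' measurableSet_Ioc).2 ?_
  filter_upwards [hα.2] with s hs hmem using hs (ha.trans hmem.1.le)

theorem Admissible.integrableOn_Ioc (hα : Admissible α) {a b : ℝ} (ha : 0 ≤ a) :
    IntegrableOn α (Ioc a b) :=
  (integrable_const (1 : ℝ)).mono' hα.1.aestronglyMeasurable (hα.ae_norm_le_one ha)

theorem Admissible.intervalIntegrable (hα : Admissible α) {a b : ℝ} (ha : 0 ≤ a)
    (hab : a ≤ b) : IntervalIntegrable α volume a b :=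
  (intervalIntegrable_iff_integrableOn_Ioc_of_le hab).2 (hα.integrableOn_Ioc ha)

theorem traj_of_nonpos (x : Euc n) (α : ℝ → Euc n) {t : ℝ} (ht : t ≤ 0) :
    traj x α t = x := by
  simp [traj, Ioc_eq_empty_of_le ht]

theorem traj_zero (x : Euc n) (α : ℝ → Euc n) : traj x α 0 = x :=
  traj_of_nonpos x α le_rfl

theorem traj_max_zero (x : Euc n) (α : ℝ → Euc n) (t : ℝ) :
    traj x α (max t 0) = traj x α t := by
  rcases le_total t 0 with ht | ht
  · rw [max_eq_right ht, traj_zero, traj_of_nonpos x α ht]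
  · rw [max_eq_left ht]

theorem traj_eq_intervalIntegral (x : Euc n) (α : ℝ → Euc n) {t : ℝ} (ht : 0 ≤ t) :
    traj x α t = x + ∫ s in (0 : ℝ)..t, α s := by
  rw [traj, intervalIntegral.integral_of_le ht]

theorem traj_congr {α' : ℝ → Euc n} {t : ℝ} (h : EqOn α α' (Ioc 0 t)) :
    traj x α t = traj x α' t := by
  rw [traj, traj, setIntegral_congr_fun measurableSet_Ioc h]

theorem Admissible.traj_eq_add (hα : Admissible α) (x : Euc n) {s t : ℝ} (hs : 0 ≤ s)
    (hst : s ≤ t) : traj x α t = traj x α s + ∫ u in s..t, α u := by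
  rw [traj_eq_intervalIntegral x α (hs.trans hst), traj_eq_intervalIntegral x α hs, add_assoc,
    intervalIntegral.integral_add_adjacent_intervals (hα.intervalIntegrable le_rfl hs)
      (hα.intervalIntegrable hs hst)]

theorem Admissible.dist_traj_le (hα : Admissible α) (x : Euc n) {s t : ℝ} (hs : 0 ≤ s)
    (hst : s ≤ t) : dist (traj x α t) (traj x α s) ≤ t - s := by
  rw [dist_eq_norm, hα.traj_eq_add x hs hst, add_sub_cancel_left,
    intervalIntegral.integral_of_le hst]
  calc ‖∫ u in Ioc s t, α u‖ ≤ ∫ u in Ioc s t, ‖α u‖ := norm_integral_le_integral_norm _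
    _ ≤ ∫ _ in Ioc s t, (1 : ℝ) :=
        integral_mono_ae (hα.integrableOn_Ioc hs).norm (integrable_const _)
          (hα.ae_norm_le_one hs)
    _ = t - s := by simp [hst]

theorem Admissible.dist_traj_self_le (hα : Admissible α) (x : Euc n) {t : ℝ} (ht : 0 ≤ t) :
    dist (traj x α t) x ≤ t := by
  simpa [traj_zero] using hα.dist_traj_le x le_rfl ht

theorem Admissible.lipschitzWith_traj (hα : Admissible α) (x : Euc n) :
    LipschitzWith 1 (traj x α) := by
  have key : ∀ a b, a ≤ b → dist (traj x α b) (traj x α a) ≤ dist b a := fun a b hab => by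
    rw [← traj_max_zero x α a, ← traj_max_zero x α b]
    calc _ ≤ max b 0 - max a 0 :=
          hα.dist_traj_le x (le_max_right a 0) (max_le_max_right 0 hab)
      _ ≤ dist b a := by
          rw [Real.dist_eq, abs_of_nonneg (sub_nonneg.2 hab)]
          exact max_sub_max_le_max b 0 a 0 |>.trans (by simp [hab])
  refine LipschitzWith.of_dist_le_mul fun a b => ?_
  rw [NNReal.coe_one, one_mul]
  rcases le_total a b with hab | hab
  · rw [dist_comm, dist_comm a]; exact key a b hab
  · exact key b a hab

theorem Admissible.continuous_traj (hα : Admissible α) (x : Euc n) : Continuous (traj x α) :=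
  (hα.lipschitzWith_traj x).continuous

end Trajectory

section HitTime

variable {M : Set (Euc n)} {x : Euc n} {α : ℝ → Euc n}

theorem hitTime_le (α : ℝ → Euc n) {s : ℝ} (hs : 0 ≤ s) (hmem : traj x α s ∈ M) :
    hitTime M x α ≤ ENNReal.ofReal s :=
  iInf₂_le_of_le s hs (iInf_le _ hmem)

theorem hitTime_eq_zero_of_mem (α : ℝ → Euc n) (hx : x ∈ M) : hitTime M x α = 0 :=
  nonpos_iff_eq_zero.1 <| by simpa using hitTime_le α le_rfl (by rwa [traj_zero])

theorem Admissible.ofReal_infDist_le_hitTime (hα : Admissible α) :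
    ENNReal.ofReal (infDist x M) ≤ hitTime M x α :=
  le_iInf₂ fun s hs => le_iInf fun hmem => ENNReal.ofReal_le_ofReal <|
    (infDist_le_dist_of_mem hmem).trans <| by rw [dist_comm]; exact hα.dist_traj_self_le x hs

theorem traj_notMem_of_lt_hitTime {t : ℝ} (ht : ENNReal.ofReal t < hitTime M x α) {s : ℝ}
    (hs : 0 ≤ s) (hst : s ≤ t) : traj x α s ∉ M := fun hmem =>
  ((hitTime_le α hs hmem).trans (ENNReal.ofReal_le_ofReal hst)).not_gt ht

end HitTime

noncomputable def runningCost (l : Euc n → ℝ) (x : Euc n) (α : ℝ → Euc n) (t : ℝ) : ℝ :=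
  ∫ s in (0 : ℝ)..t, l (traj x α s)

section RunningCost

variable {M : Set (Euc n)} {l : Euc n → ℝ} {x : Euc n} {α : ℝ → Euc n}

theorem runningCost_zero : runningCost l x α 0 = 0 :=
  intervalIntegral.integral_same

theorem hasDerivAt_runningCost (hl : Continuous l) (hα : Admissible α) (t : ℝ) :
    HasDerivAt (runningCost l x α) (l (traj x α t)) t :=
  (hl.comp (hα.continuous_traj x)).integral_hasStrictDerivAt 0 t |>.hasDerivAt

theorem runningCost_nonneg (hl0 : ∀ z, 0 ≤ l z) {t : ℝ} (ht : 0 ≤ t) :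
    0 ≤ runningCost l x α t :=
  intervalIntegral.integral_nonneg ht fun _ _ => hl0 _

theorem monotone_runningCost (hl : Continuous l) (hl0 : ∀ z, 0 ≤ l z) (hα : Admissible α) :
    Monotone (runningCost l x α) :=
  monotone_of_hasDerivAt_nonneg (hasDerivAt_runningCost hl hα) fun _ => hl0 _

theorem ofReal_runningCost (hl : Continuous l) (hl0 : ∀ z, 0 ≤ l z) (hα : Admissible α)
    {t : ℝ} (ht : 0 ≤ t) :
    ENNReal.ofReal (runningCost l x α t)
      = ∫⁻ s in Ioc 0 t, ENNReal.ofReal (l (traj x α s)) := by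
  rw [runningCost, intervalIntegral.integral_of_le ht]
  exact ofReal_integral_eq_lintegral_ofReal
    (hl.comp (hα.continuous_traj x)).integrableOn_Ioc (ae_of_all _ fun _ => hl0 _)

theorem ofReal_runningCost_le_cost (hl : Continuous l) (hl0 : ∀ z, 0 ≤ l z)
    (hα : Admissible α) {t : ℝ} (ht : 0 ≤ t) (hlt : ENNReal.ofReal t < hitTime M x α) :
    ENNReal.ofReal (runningCost l x α t) ≤ cost M l x α := by
  rw [ofReal_runningCost hl hl0 hα ht, cost]
  exact lintegral_mono_set fun s hs =>
    ⟨hs.1, (ENNReal.ofReal_le_ofReal hs.2).trans_lt hlt⟩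

end RunningCost

noncomputable def shiftControl (α : ℝ → Euc n) (t : ℝ) : ℝ → Euc n := fun s => α (t + s)

noncomputable def concatControl (α : ℝ → Euc n) (t : ℝ) (β : ℝ → Euc n) : ℝ → Euc n :=
  fun s => if s ≤ t then α s else β (s - t)

section DynamicProgramming

variable {M : Set (Euc n)} {l : Euc n → ℝ} {x : Euc n} {α β : ℝ → Euc n}

theorem valE_le_cost (x : Euc n) (hα : Admissible α) : valE M l x ≤ cost M l x α :=
  iInf₂_le α hα

theorem cost_congr (h : traj x α = traj x β) : cost M l x α = cost M l x β := by
  simp only [cost, hitTime, h]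

theorem Admissible.shift (hα : Admissible α) {t : ℝ} (ht : 0 ≤ t) :
    Admissible (shiftControl α t) := by
  refine ⟨hα.1.comp (measurable_const_add t), ?_⟩
  filter_upwards [(measurePreserving_add_left volume t).quasiMeasurePreserving.ae hα.2]
    with s hs hs0 using hs (by linarith)

theorem Admissible.concat (hα : Admissible α) (hβ : Admissible β) (t : ℝ) :
    Admissible (concatControl α t β) := by
  refine ⟨Measurable.ite measurableSet_Iic hα.1 (hβ.1.comp (measurable_sub_const t)), ?_⟩
  filter_upwards [hα.2, (measurePreserving_sub_right volume t).quasiMeasurePreserving.ae hβ.2]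
    with s hsα hsβ hs0
  by_cases hst : s ≤ t
  · simpa [concatControl, hst] using hsα hs0
  · simpa [concatControl, hst] using hsβ (by linarith)

theorem Admissible.traj_shiftControl (hα : Admissible α) (x : Euc n) {t u : ℝ} (ht : 0 ≤ t)
    (hu : 0 ≤ u) : traj (traj x α t) (shiftControl α t) u = traj x α (t + u) := by
  rw [traj_eq_intervalIntegral _ _ hu, hα.traj_eq_add x ht (le_add_of_nonneg_right hu)]
  simp only [shiftControl, intervalIntegral.integral_comp_add_left α t, add_zero]

theorem traj_concatControl_of_le {t s : ℝ} (hs : s ≤ t) :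
    traj x (concatControl α t β) s = traj x α s :=
  traj_congr fun _ hu => if_pos (hu.2.trans hs)

theorem traj_shiftControl_concatControl (y : Euc n) (t : ℝ) :
    traj y (shiftControl (concatControl α t β) t) = traj y β :=
  funext fun _ => traj_congr fun u hu => by
    simp [shiftControl, concatControl, not_le.2 hu.1]

theorem runningCost_concatControl {t : ℝ} (ht : 0 ≤ t) :
    runningCost l x (concatControl α t β) t = runningCost l x α t :=
  intervalIntegral.integral_congr fun s hs => by
    rw [uIcc_of_le ht] at hs
    simp only [traj_concatControl_of_le hs.2]

theorem Admissible.hitTime_le_add_hitTime_shift (hα : Admissible α) {t : ℝ} (ht : 0 ≤ t) :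
    hitTime M x α ≤ ENNReal.ofReal t + hitTime M (traj x α t) (shiftControl α t) := by
  refine tsub_le_iff_left.1 <| le_iInf₂ fun u hu => le_iInf fun hmem => ?_
  rw [hα.traj_shiftControl x ht hu] at hmem
  rw [tsub_le_iff_left, ← ENNReal.ofReal_add ht hu]
  exact hitTime_le α (add_nonneg ht hu) hmem

theorem Admissible.add_hitTime_shift_le (hα : Admissible α) {t : ℝ} (ht : 0 ≤ t)
    (hlt : ENNReal.ofReal t < hitTime M x α) :
    ENNReal.ofReal t + hitTime M (traj x α t) (shiftControl α t) ≤ hitTime M x α := by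
  refine le_iInf₂ fun s hs => le_iInf fun hmem => ?_
  have hts : t ≤ s := not_lt.1 fun hst => traj_notMem_of_lt_hitTime hlt hs hst.le hmem
  rw [← add_sub_cancel t s, ← hα.traj_shiftControl x ht (sub_nonneg.2 hts)] at hmem
  rw [← add_sub_cancel t s, ENNReal.ofReal_add ht (sub_nonneg.2 hts)]
  exact add_le_add le_rfl (hitTime_le _ (sub_nonneg.2 hts) hmem)

theorem measurableSet_Ioi_inter_ofReal_lt (t : ℝ) (c : ℝ≥0∞) :
    MeasurableSet {s : ℝ | t < s ∧ ENNReal.ofReal s < c} :=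
  measurableSet_Ioi.inter (measurableSet_lt ENNReal.measurable_ofReal measurable_const)

theorem Admissible.cost_shift (hα : Admissible α) {t : ℝ} (ht : 0 ≤ t) :
    cost M l (traj x α t) (shiftControl α t)
      = ∫⁻ s in {s | t < s ∧
          ENNReal.ofReal s < ENNReal.ofReal t + hitTime M (traj x α t) (shiftControl α t)},
        ENNReal.ofReal (l (traj x α s)) := by
  rw [cost, ← lintegral_indicator (measurableSet_Ioi_inter_ofReal_lt 0 _),
    ← lintegral_indicator (measurableSet_Ioi_inter_ofReal_lt t _)]
  conv_rhs => rw [← lintegral_add_left_eq_self _ t]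
  congr 1 with u
  rcases le_or_gt u 0 with hu | hu
  · simp [indicator, not_lt.2 hu]
  · simp only [indicator, mem_ofPred_eq, hu, true_and, lt_add_iff_pos_right,
      ENNReal.ofReal_add ht hu.le, ENNReal.add_lt_add_iff_left ENNReal.ofReal_ne_top,
      hα.traj_shiftControl x ht hu.le]

theorem Admissible.cost_le_runningCost_add_cost_shift (hl : Continuous l) (hl0 : ∀ z, 0 ≤ l z)
    (hα : Admissible α) {t : ℝ} (ht : 0 ≤ t) :
    cost M l x α
      ≤ ENNReal.ofReal (runningCost l x α t) + cost M l (traj x α t) (shiftControl α t) := by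
  rw [ofReal_runningCost hl hl0 hα ht, hα.cost_shift ht, cost]
  refine (lintegral_mono_set fun s hs => ?_).trans (lintegral_union_le _ _ _)
  rcases le_or_gt s t with hst | hst
  · exact Or.inl ⟨hs.1, hst⟩
  · exact Or.inr ⟨hst, hs.2.trans_le (hα.hitTime_le_add_hitTime_shift ht)⟩

theorem Admissible.runningCost_add_cost_shift_le_cost (hl : Continuous l) (hl0 : ∀ z, 0 ≤ l z)
    (hα : Admissible α) {t : ℝ} (ht : 0 ≤ t) (hlt : ENNReal.ofReal t < hitTime M x α) :
    ENNReal.ofReal (runningCost l x α t) + cost M l (traj x α t) (shiftControl α t)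
      ≤ cost M l x α := by
  rw [ofReal_runningCost hl hl0 hα ht, hα.cost_shift ht, cost, ← lintegral_union
    (measurableSet_Ioi_inter_ofReal_lt t _) (disjoint_left.2 fun s hs hs' => hs.2.not_gt hs'.1)]
  refine lintegral_mono_set (union_subset (fun s hs => ?_) fun s hs => ?_)
  · exact ⟨hs.1, (ENNReal.ofReal_le_ofReal hs.2).trans_lt hlt⟩
  · exact ⟨ht.trans_lt hs.1, hs.2.trans_le (hα.add_hitTime_shift_le ht hlt)⟩

theorem Admissible.valE_le_runningCost_add_cost (hl : Continuous l) (hl0 : ∀ z, 0 ≤ l z)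
    (hα : Admissible α) (hβ : Admissible β) {t : ℝ} (ht : 0 ≤ t) :
    valE M l x ≤ ENNReal.ofReal (runningCost l x α t) + cost M l (traj x α t) β := by
  have hγ := hα.concat hβ t
  calc valE M l x ≤ cost M l x (concatControl α t β) := valE_le_cost x hγ
    _ ≤ _ := hγ.cost_le_runningCost_add_cost_shift hl hl0 ht
    _ = _ := by
      rw [runningCost_concatControl ht, traj_concatControl_of_le le_rfl,
        cost_congr (traj_shiftControl_concatControl _ t)]

theorem Admissible.valE_sub_runningCost_le (hl : Continuous l) (hl0 : ∀ z, 0 ≤ l z)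
    (hα : Admissible α) {t : ℝ} (ht : 0 ≤ t) :
    valE M l x - ENNReal.ofReal (runningCost l x α t) ≤ valE M l (traj x α t) :=
  le_iInf₂ fun _ hβ => tsub_le_iff_left.2 (hα.valE_le_runningCost_add_cost hl hl0 hβ ht)

end DynamicProgramming

theorem integral_sqrt_sub (T : ℝ) :
    ∫ s in (0 : ℝ)..T, √(T - s) = 2 / 3 * T ^ ((3 : ℝ) / 2) := by
  simp_rw [Real.sqrt_eq_rpow]
  rw [intervalIntegral.integral_comp_sub_left (fun u => u ^ ((1 : ℝ) / 2)) T, sub_self,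
    sub_zero, integral_rpow (Or.inl (by norm_num)), Real.zero_rpow (by norm_num)]
  norm_num
  ring

section ValueUpperBound

variable {M : Set (Euc n)} {l : Euc n → ℝ} {x : Euc n}

theorem admissible_const {e : Euc n} (he : ‖e‖ ≤ 1) : Admissible (fun _ : ℝ => e) :=
  ⟨measurable_const, ae_of_all _ fun _ _ => he⟩

theorem traj_const (x e : Euc n) {t : ℝ} (ht : 0 ≤ t) : traj x (fun _ => e) t = x + t • e := by
  simp [traj, ht]

theorem valE_eq_zero_of_mem (hx : x ∈ M) : valE M l x = 0 := by
  refine nonpos_iff_eq_zero.1 <| (valE_le_cost x (admissible_const (e := 0) (by simp))).trans ?_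
  simp [cost, hitTime_eq_zero_of_mem _ hx]

theorem valE_le_of_mem {L : ℝ} (hL : 0 ≤ L) {m : Euc n} (hm : m ∈ M)
    (hup : ∀ w, l w ≤ L * √(dist w m)) (z : Euc n) :
    valE M l z ≤ ENNReal.ofReal (2 / 3 * L * dist z m ^ ((3 : ℝ) / 2)) := by
  set T := dist z m
  rcases (dist_nonneg : 0 ≤ T).eq_or_lt with hT | hT
  · rw [valE_eq_zero_of_mem (by rwa [dist_eq_zero.1 hT.symm])]
    exact zero_le
  set e : Euc n := T⁻¹ • (m - z)
  have he : ‖e‖ = 1 := by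
    rw [norm_smul, norm_inv, Real.norm_eq_abs, abs_of_pos hT, ← dist_eq_norm',
      inv_mul_cancel₀ hT.ne']
  have hα := admissible_const he.le
  have hend : traj z (fun _ => e) T = m := by
    rw [traj_const z e hT.le, smul_inv_smul₀ hT.ne', add_sub_cancel]
  have hhit : hitTime M z (fun _ => e) ≤ ENNReal.ofReal T := hitTime_le _ hT.le (hend ▸ hm)
  have hbound : ∀ s ∈ Ioc 0 T, l (traj z (fun _ => e) s) ≤ L * √(T - s) := fun s hs =>
    (hup _).trans <| by
      gcongr
      simpa [hend] using hα.dist_traj_le z hs.1.le hs.2 |>.trans_eq' (dist_comm _ _)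
  have hint : IntegrableOn (fun s => L * √(T - s)) (Ioc 0 T) :=
    (by fun_prop : Continuous fun s : ℝ => L * √(T - s)).integrableOn_Ioc
  calc valE M l z ≤ cost M l z (fun _ => e) := valE_le_cost z hα
    _ ≤ ∫⁻ s in Ioc 0 T, ENNReal.ofReal (l (traj z (fun _ => e) s)) :=
        lintegral_mono_set fun s hs => ⟨hs.1, (ENNReal.ofReal_lt_ofReal_iff hT).1
          (hs.2.trans_le hhit) |>.le⟩
    _ ≤ ∫⁻ s in Ioc 0 T, ENNReal.ofReal (L * √(T - s)) :=
        setLIntegral_mono (by fun_prop) fun s hs => ENNReal.ofReal_le_ofReal (hbound s hs)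
    _ = ENNReal.ofReal (2 / 3 * L * T ^ ((3 : ℝ) / 2)) := by
        rw [← ofReal_integral_eq_lintegral_ofReal hint (ae_of_all _ fun _ => by positivity),
          ← intervalIntegral.integral_of_le hT.le, intervalIntegral.integral_const_mul,
          integral_sqrt_sub]
        ring_nf

theorem valE_le_infDist (hM : M.Nonempty) {L : ℝ} (hL : 0 ≤ L)
    (hup : ∀ w, ∀ m ∈ M, l w ≤ L * √(dist w m)) (z : Euc n) :
    valE M l z ≤ ENNReal.ofReal (2 / 3 * L * infDist z M ^ ((3 : ℝ) / 2)) := by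
  set φ : ℝ → ℝ≥0∞ := fun u => ENNReal.ofReal (2 / 3 * L * u ^ ((3 : ℝ) / 2))
  have hφ : Continuous φ := ENNReal.continuous_ofReal.comp <|
    continuous_const.mul (Real.continuous_rpow_const (by norm_num))
  have hstep : ∀ ε > 0, valE M l z ≤ φ (infDist z M + ε) := fun ε hε => by
    obtain ⟨m, hm, hlt⟩ := (infDist_lt_iff hM).1 (lt_add_of_pos_right (infDist z M) hε)
    exact (valE_le_of_mem hL hm (hup · m hm) z).trans (ENNReal.ofReal_le_ofReal (by gcongr))
  have hlim : Tendsto (fun ε => φ (infDist z M + ε)) (𝓝[>] 0) (𝓝 (φ (infDist z M))) :=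
    ((hφ.comp (continuous_const_add _)).tendsto' 0 _ (by simp)).mono_left nhdsWithin_le_nhds
  exact ge_of_tendsto hlim (eventually_nhdsWithin_of_forall hstep)

end ValueUpperBound

theorem mul_sub_lt_rpow_of_deriv_le_neg_rpow {g g' : ℝ → ℝ} {a b A θ : ℝ} (hθ : θ < 1)
    (hab : a ≤ b) (hg : ∀ t ∈ Icc a b, HasDerivAt g (g' t) t)
    (hpos : ∀ t ∈ Icc a b, 0 < g t) (hg' : ∀ t ∈ Icc a b, g' t ≤ -(A * g t ^ θ)) :
    A * (1 - θ) * (b - a) < g a ^ (1 - θ) := by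
  have hφ : ∀ t ∈ Icc a b, HasDerivAt (fun s => g s ^ (1 - θ) + A * (1 - θ) * s)
      (g' t * (1 - θ) * g t ^ (1 - θ - 1) + A * (1 - θ)) t := fun t ht =>
    ((hg t ht).rpow_const (Or.inl (hpos t ht).ne')).add
      (by simpa using (hasDerivAt_id t).const_mul (A * (1 - θ)))
  have hφ' : ∀ t ∈ Icc a b, g' t * (1 - θ) * g t ^ (1 - θ - 1) + A * (1 - θ) ≤ 0 := by
    intro t ht
    have hgθ : 0 < g t ^ θ := Real.rpow_pos_of_pos (hpos t ht) θ
    rw [show 1 - θ - 1 = -θ by ring, Real.rpow_neg (hpos t ht).le]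
    have : g' t * (g t ^ θ)⁻¹ ≤ -A := by
      rw [← div_eq_mul_inv, div_le_iff₀ hgθ]; linarith [hg' t ht]
    nlinarith
  have hanti : AntitoneOn (fun s => g s ^ (1 - θ) + A * (1 - θ) * s) (Icc a b) :=
    antitoneOn_of_hasDerivWithinAt_nonpos (convex_Icc a b)
      (fun t ht => (hφ t ht).continuousAt.continuousWithinAt)
      (fun t ht => (hφ t (interior_subset ht)).hasDerivWithinAt)
      (fun t ht => hφ' t (interior_subset ht))
  have hb := hanti ⟨le_rfl, hab⟩ ⟨hab, le_rfl⟩ hab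
  have hgb : 0 < g b ^ (1 - θ) := Real.rpow_pos_of_pos (hpos b ⟨hab, le_rfl⟩) _
  simp only at hb
  linarith

theorem rpow_le_mul_rpow_of_le_mul_rpow {g K m p q : ℝ} (hg : 0 ≤ g) (hK : 0 ≤ K) (hm : 0 ≤ m)
    (hq : 0 ≤ q) (h : g ≤ K * m ^ p) : g ^ q ≤ K ^ q * m ^ (p * q) := by
  rw [Real.rpow_mul hm, ← Real.mul_rpow hK (Real.rpow_nonneg hm p)]
  exact Real.rpow_le_rpow hg h hq

section CostPositivity

variable {M : Set (Euc n)} {l : Euc n → ℝ} {x : Euc n} {α : ℝ → Euc n}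

theorem Admissible.cost_pos (hl : Continuous l) (hα : Admissible α) (hd : 0 < infDist x M)
    (hlx : 0 < l x) : 0 < cost M l x α := by
  obtain ⟨ε, hε, hball⟩ := Metric.continuousAt_iff.1 hl.continuousAt (l x / 2) (half_pos hlx)
  set m := min ε (infDist x M)
  have hm : 0 < m := lt_min hε hd
  have hsub : Ioo 0 m ⊆ {s | 0 < s ∧ ENNReal.ofReal s < hitTime M x α} := fun s hs =>
    ⟨hs.1, ((ENNReal.ofReal_lt_ofReal_iff hd).2 (hs.2.trans_le (min_le_right _ _))).trans_le
      hα.ofReal_infDist_le_hitTime⟩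
  have hlower : ∀ s ∈ Ioo 0 m, ENNReal.ofReal (l x / 2) ≤ ENNReal.ofReal (l (traj x α s)) :=
    fun s hs => ENNReal.ofReal_le_ofReal <| by
      have := hball ((hα.dist_traj_self_le x hs.1.le).trans_lt (hs.2.trans_le (min_le_left _ _)))
      rw [Real.dist_eq] at this
      linarith [neg_abs_le (l (traj x α s) - l x)]
  calc 0 < ∫⁻ _ in Ioo 0 m, ENNReal.ofReal (l x / 2) := by
        simp [hlx, hm]
    _ ≤ ∫⁻ s in Ioo 0 m, ENNReal.ofReal (l (traj x α s)) :=
        setLIntegral_mono (hl.comp (hα.continuous_traj x)).measurable.ennreal_ofReal hlower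
    _ ≤ cost M l x α := lintegral_mono_set hsub

end CostPositivity

theorem cost_eq_iSup_runningCost {M : Set (Euc n)} {l : Euc n → ℝ} {x : Euc n}
    {α : ℝ → Euc n} (hl : Continuous l) (hl0 : ∀ z, 0 ≤ l z) (hα : Admissible α)
    (htop : hitTime M x α = ⊤) :
    cost M l x α = ⨆ k : ℕ, ENNReal.ofReal (runningCost l x α k) := by
  have hdom : {s : ℝ | 0 < s ∧ ENNReal.ofReal s < hitTime M x α} = ⋃ k : ℕ, Ioc 0 (k : ℝ) := by
    ext s
    simpa [htop] using fun hs : 0 < s => exists_nat_ge s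
  have hmono : Monotone fun k : ℕ => Ioc (0 : ℝ) k := fun _ _ h =>
    Ioc_subset_Ioc_right (Nat.cast_le.2 h)
  rw [cost, hdom, setLIntegral_iUnion_of_directed _ hmono.directed_le]
  simp_rw [ofReal_runningCost hl hl0 hα (Nat.cast_nonneg _)]

section OptimalControl

variable {M : Set (Euc n)} {l : Euc n → ℝ} {cl r β K : ℝ} {x : Euc n} {α : ℝ → Euc n}
  (hMc : IsClosed M) (hMne : M.Nonempty) (hl : Continuous l) (hcl : 0 < cl) (hr : 0 < r)
  (hβ0 : 0 < β) (hβ : β < 3 / 2) (hK : 0 < K)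
  (hgrowth : ∀ w, cl * min (infDist w M) r ^ β ≤ l w)
  (hval : ∀ z, valE M l z ≤ ENNReal.ofReal (K * infDist z M ^ ((3 : ℝ) / 2)))
  (hopt : IsOptimal M l x α)

include hr hgrowth hcl in
theorem nonneg_of_growth (z : Euc n) : 0 ≤ l z :=
  (mul_nonneg hcl.le (Real.rpow_nonneg (le_min infDist_nonneg hr.le) β)).trans (hgrowth z)

include hr hgrowth hcl hMc hMne in
theorem pos_of_growth {z : Euc n} (hz : z ∉ M) : 0 < l z :=
  (mul_pos hcl (Real.rpow_pos_of_pos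
    (lt_min ((hMc.notMem_iff_infDist_pos hMne).1 hz) hr) β)).trans_le (hgrowth z)

include hl hr hgrowth hcl hK hval hopt in
theorem IsOptimal.toReal_valE_sub_runningCost_le {t : ℝ} (ht : 0 ≤ t)
    (hlt : ENNReal.ofReal t < hitTime M x α) :
    (valE M l x).toReal - runningCost l x α t ≤ K * infDist (traj x α t) M ^ ((3 : ℝ) / 2) := by
  have hl0 := nonneg_of_growth hcl hr hgrowth
  have hF : ENNReal.ofReal (runningCost l x α t) ≤ valE M l x :=
    hopt.2 ▸ ofReal_runningCost_le_cost hl hl0 hopt.1 ht hlt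
  have hVne : valE M l x ≠ ⊤ := ne_top_of_le_ne_top ENNReal.ofReal_ne_top (hval x)
  have h := ENNReal.toReal_mono ENNReal.ofReal_ne_top
    ((hopt.1.valE_sub_runningCost_le (x := x) hl hl0 ht).trans (hval _))
  rwa [ENNReal.toReal_sub_of_le hF hVne, ENNReal.toReal_ofReal (runningCost_nonneg hl0 ht),
    ENNReal.toReal_ofReal (mul_nonneg hK.le (Real.rpow_nonneg infDist_nonneg _))] at h

include hMc hMne hl hr hgrowth hcl hval hopt in
theorem IsOptimal.runningCost_lt_toReal_valE {t : ℝ} (ht : 0 ≤ t)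
    (hlt : ENNReal.ofReal t < hitTime M x α) : runningCost l x α t < (valE M l x).toReal := by
  have hl0 := nonneg_of_growth hcl hr hgrowth
  have hy : traj x α t ∉ M := traj_notMem_of_lt_hitTime hlt ht le_rfl
  have hcost : 0 < cost M l (traj x α t) (shiftControl α t) :=
    (hopt.1.shift ht).cost_pos hl ((hMc.notMem_iff_infDist_pos hMne).1 hy)
      (pos_of_growth hMc hMne hcl hr hgrowth hy)
  have hlt' : ENNReal.ofReal (runningCost l x α t) < valE M l x :=
    (ENNReal.lt_add_right ENNReal.ofReal_ne_top hcost.ne').trans_le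
      (hopt.2 ▸ hopt.1.runningCost_add_cost_shift_le_cost hl hl0 ht hlt)
  have hVne : valE M l x ≠ ⊤ := ne_top_of_le_ne_top ENNReal.ofReal_ne_top (hval x)
  exact (ENNReal.ofReal_lt_iff_lt_toReal (runningCost_nonneg hl0 ht) hVne).1 hlt'

include hMc hMne hl hcl hr hβ0 hβ hK hgrowth hval hopt in
theorem IsOptimal.mul_sub_lt_rpow_of_lt_hitTime {t₀ T : ℝ} (ht₀ : 0 ≤ t₀) (hT : t₀ ≤ T)
    (hTlt : ENNReal.ofReal T < hitTime M x α)
    (hsmall : (valE M l x).toReal - runningCost l x α t₀ ≤ K * r ^ ((3 : ℝ) / 2)) :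
    cl / K ^ (2 * β / 3) * (1 - 2 * β / 3) * (T - t₀)
      < ((valE M l x).toReal - runningCost l x α t₀) ^ (1 - 2 * β / 3) := by
  have hl0 := nonneg_of_growth hcl hr hgrowth
  have hmem : ∀ t ∈ Icc t₀ T, 0 ≤ t ∧ ENNReal.ofReal t < hitTime M x α := fun t ht =>
    ⟨ht₀.trans ht.1, (ENNReal.ofReal_le_ofReal ht.2).trans_lt hTlt⟩
  have hpos : ∀ t ∈ Icc t₀ T, 0 < (valE M l x).toReal - runningCost l x α t := fun t ht =>
    sub_pos.2 <| hopt.runningCost_lt_toReal_valE hMc hMne hl hcl hr hgrowth hval (hmem t ht).1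
      (hmem t ht).2
  refine mul_sub_lt_rpow_of_deriv_le_neg_rpow (by linarith) hT
    (fun t _ => (hasDerivAt_runningCost hl hopt.1 t).const_sub _) hpos fun t ht => ?_
  set g := (valE M l x).toReal - runningCost l x α t
  set d := min (infDist (traj x α t) M) r
  have hg : g ≤ K * d ^ ((3 : ℝ) / 2) := by
    have hd := hopt.toReal_valE_sub_runningCost_le hl hcl hr hK hgrowth hval (hmem t ht).1
      (hmem t ht).2
    have hr' : g ≤ K * r ^ ((3 : ℝ) / 2) :=
      (sub_le_sub_left (monotone_runningCost hl hl0 hopt.1 ht.1) _).trans hsmall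
    rcases min_choice (infDist (traj x α t) M) r with h | h <;> simp only [d, h] <;> assumption
  have hgθ := rpow_le_mul_rpow_of_le_mul_rpow (hpos t ht).le hK.le
    (le_min infDist_nonneg hr.le) (by positivity : 0 ≤ 2 * β / 3) hg
  rw [show 3 / 2 * (2 * β / 3) = β by ring] at hgθ
  rw [neg_le_neg_iff]
  calc cl / K ^ (2 * β / 3) * g ^ (2 * β / 3)
      ≤ cl / K ^ (2 * β / 3) * (K ^ (2 * β / 3) * d ^ β) := by gcongr
    _ = cl * d ^ β := by field_simp
    _ ≤ l (traj x α t) := hgrowth _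

include hMc hMne hl hcl hr hβ0 hβ hK hgrowth hval hopt in
theorem IsOptimal.hitTime_ne_top : hitTime M x α ≠ ⊤ := by
  intro htop
  have hl0 := nonneg_of_growth hcl hr hgrowth
  have hVne : valE M l x ≠ ⊤ := ne_top_of_le_ne_top ENNReal.ofReal_ne_top (hval x)
  have hlim : Tendsto (fun k : ℕ => runningCost l x α k) atTop (𝓝 (valE M l x).toReal) := by
    have h := tendsto_atTop_iSup fun a b hab =>
      ENNReal.ofReal_le_ofReal (monotone_runningCost (x := x) hl hl0 hopt.1 (Nat.cast_le.2 hab))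
    rw [← cost_eq_iSup_runningCost hl hl0 hopt.1 htop, hopt.2] at h
    simpa [Function.comp_def, ENNReal.toReal_ofReal (runningCost_nonneg hl0 (Nat.cast_nonneg _))]
      using (ENNReal.tendsto_toReal hVne).comp h
  obtain ⟨k, hk⟩ := ((tendsto_order.1 hlim).1 _
    (sub_lt_self _ (by positivity : 0 < K * r ^ ((3 : ℝ) / 2)))).exists
  set g := (valE M l x).toReal - runningCost l x α k
  have hg : 0 < g := sub_pos.2 <| hopt.runningCost_lt_toReal_valE hMc hMne hl hcl hr hgrowth hval
    (Nat.cast_nonneg k) (htop ▸ ENNReal.ofReal_lt_top)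
  set A := cl / K ^ (2 * β / 3) * (1 - 2 * β / 3)
  have hA : 0 < A := mul_pos (div_pos hcl (Real.rpow_pos_of_pos hK _)) (by linarith)
  have h := hopt.mul_sub_lt_rpow_of_lt_hitTime hMc hMne hl hcl hr hβ0 hβ hK hgrowth hval
    (T := k + g ^ (1 - 2 * β / 3) / A) (Nat.cast_nonneg k)
    (le_add_of_nonneg_right (by positivity)) (htop ▸ ENNReal.ofReal_lt_top) (by linarith)
  rw [add_sub_cancel_left, mul_div_cancel₀ _ hA.ne'] at h
  exact lt_irrefl _ h

include hMc hMne hl hcl hr hβ0 hβ hK hgrowth hval hopt in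
theorem IsOptimal.hitTime_le (hx : infDist x M ≤ r) :
    hitTime M x α
      ≤ ENNReal.ofReal (K / cl / (1 - 2 * β / 3) * infDist x M ^ ((3 : ℝ) / 2 - β)) := by
  have hθ : 0 < 1 - 2 * β / 3 := by linarith
  refine not_lt.1 fun hW => ?_
  have hV : (valE M l x).toReal ≤ K * infDist x M ^ ((3 : ℝ) / 2) :=
    ENNReal.toReal_le_of_le_ofReal (mul_nonneg hK.le (Real.rpow_nonneg infDist_nonneg _)) (hval x)
  have h := hopt.mul_sub_lt_rpow_of_lt_hitTime hMc hMne hl hcl hr hβ0 hβ hK hgrowth hval le_rfl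
    (mul_nonneg (div_nonneg (div_nonneg hK.le hcl.le) hθ.le) (Real.rpow_nonneg infDist_nonneg _))
    hW (by rw [runningCost_zero, sub_zero]; exact hV.trans (by gcongr; exact infDist_nonneg))
  rw [runningCost_zero, sub_zero, sub_zero] at h
  have hVθ := rpow_le_mul_rpow_of_le_mul_rpow ENNReal.toReal_nonneg hK.le infDist_nonneg hθ.le hV
  rw [show 3 / 2 * (1 - 2 * β / 3) = 3 / 2 - β by ring] at hVθ
  have hW : cl / K ^ (2 * β / 3) * (1 - 2 * β / 3)
      * (K / cl / (1 - 2 * β / 3) * infDist x M ^ ((3 : ℝ) / 2 - β))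
      = K ^ (1 - 2 * β / 3) * infDist x M ^ ((3 : ℝ) / 2 - β) := by
    have h3 : 3 - 2 * β ≠ 0 := by linarith
    rw [Real.rpow_sub hK, Real.rpow_one]
    field_simp
  linarith

end OptimalControl

section Eikonal

variable {f : Euc n → ℝ} {flo : ℝ}

theorem isClosed_MOf (hcont : Continuous f) : IsClosed (MOf f flo) :=
  isClosed_eq hcont continuous_const

theorem continuous_lOf (hcont : Continuous f) : Continuous (lOf f flo) := by
  unfold lOf
  fun_prop

theorem lOf_le_sqrt_mul_sqrt_dist {C1 : ℝ} (hlip : ∀ x y : Euc n, |f x - f y| ≤ C1 * dist x y)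
    (w : Euc n) {m : Euc n} (hm : m ∈ MOf f flo) :
    lOf f flo w ≤ √(2 * C1) * √(dist w m) := by
  rw [← Real.sqrt_mul' _ dist_nonneg, lOf]
  refine Real.sqrt_le_sqrt ?_
  have := (le_abs_self _).trans (hlip w m)
  rw [show f m = flo from hm] at this
  linarith

theorem exists_growth_lOf {γ : ℝ → ℝ} {c r β : ℝ}
    (hH : ∀ δ : ℝ, 0 < δ → 0 < γ δ ∧
      γ δ < sInf (lOf f flo '' {y : Euc n | δ < Metric.infDist y (MOf f flo)}))
    (hc : 0 < c) (hr : 0 < r)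
    (hlow : ∀ x : Euc n, Metric.infDist x (MOf f flo) ≤ r →
      c * Metric.infDist x (MOf f flo) ^ β ≤ lOf f flo x) :
    ∃ cl > 0, ∀ w, cl * min (infDist w (MOf f flo)) r ^ β ≤ lOf f flo w := by
  obtain ⟨hγ, hγlt⟩ := hH r hr
  have hrβ : 0 < r ^ β := Real.rpow_pos_of_pos hr β
  refine ⟨min c (γ r / r ^ β), lt_min hc (div_pos hγ hrβ), fun w => ?_⟩
  rcases le_or_gt (infDist w (MOf f flo)) r with hw | hw
  · rw [min_eq_left hw]
    exact (mul_le_mul_of_nonneg_right (min_le_left _ _)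
      (Real.rpow_nonneg infDist_nonneg β)).trans (hlow w hw)
  · have hbdd : BddBelow (lOf f flo '' {y | r < infDist y (MOf f flo)}) :=
      ⟨0, fun _ ⟨_, _, hy⟩ => hy ▸ Real.sqrt_nonneg _⟩
    rw [min_eq_right hw.le]
    calc min c (γ r / r ^ β) * r ^ β ≤ γ r / r ^ β * r ^ β := by gcongr; exact min_le_right _ _
      _ = γ r := div_mul_cancel₀ _ hrβ.ne'
      _ ≤ lOf f flo w := (hγlt.trans_le (csInf_le hbdd ⟨w, hw, rfl⟩)).le

end Eikonal

theorem stmt19_general {n : ℕ} (f : Euc n → ℝ) (flo C1 : ℝ)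
    (hcont : Continuous f)
    (hattain : ∃ x, f x = flo)
    (hlip : ∀ x y : Euc n, |f x - f y| ≤ C1 * dist x y)
    (γ : ℝ → ℝ)
    (hH : ∀ δ : ℝ, 0 < δ → 0 < γ δ ∧
      γ δ < sInf (lOf f flo '' {y : Euc n | δ < Metric.infDist y (MOf f flo)}))
    (c r β : ℝ) (hc : 0 < c) (hr : 0 < r) (hβ0 : 0 < β) (hβ : β < 3 / 2)
    (hlow : ∀ x : Euc n, Metric.infDist x (MOf f flo) ≤ r →
      c * Metric.infDist x (MOf f flo) ^ β ≤ lOf f flo x) :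
    (∀ x : Euc n, ∀ α : ℝ → Euc n, IsOptimal (MOf f flo) (lOf f flo) x α →
      hitTime (MOf f flo) x α ≠ ⊤) ∧
    ∃ C : ℝ, 0 < C ∧ ∃ r₀ : ℝ, 0 < r₀ ∧
      ∀ x : Euc n, Metric.infDist x (MOf f flo) ≤ r₀ →
        ∀ α : ℝ → Euc n, IsOptimal (MOf f flo) (lOf f flo) x α →
          hitTime (MOf f flo) x α ≤
            ENNReal.ofReal ((C / (1 - 2 * β / 3)) *
              Metric.infDist x (MOf f flo) ^ ((3 : ℝ) / 2 - β)) := by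
  have hMc := isClosed_MOf (flo := flo) hcont
  have hl := continuous_lOf (flo := flo) hcont
  obtain ⟨cl, hcl, hgrowth⟩ := exists_growth_lOf hH hc hr hlow
  set K := 2 / 3 * √(2 * C1) + 1
  have hK : 0 < K := by positivity
  have hval : ∀ z, valE (MOf f flo) (lOf f flo) z
      ≤ ENNReal.ofReal (K * infDist z (MOf f flo) ^ ((3 : ℝ) / 2)) := fun z =>
    (valE_le_infDist hattain (Real.sqrt_nonneg _) (fun w _ => lOf_le_sqrt_mul_sqrt_dist hlip w)
      z).trans <| ENNReal.ofReal_le_ofReal <|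
        mul_le_mul_of_nonneg_right (le_add_of_nonneg_right zero_le_one)
          (Real.rpow_nonneg infDist_nonneg _)
  exact ⟨fun x α hopt => hopt.hitTime_ne_top hMc hattain hl hcl hr hβ0 hβ hK hgrowth hval,
    K / cl, by positivity, r, hr, fun x hx α hopt =>
      hopt.hitTime_le hMc hattain hl hcl hr hβ0 hβ hK hgrowth hval hx⟩

/-- with `ℓ(x) = √(2(f(x)-f̲))`, `f` satisfying (A), (B), `ℓ` satisfying
(H), and `ℓ(x) ≥ c·dist(x,𝔐)^β` near `𝔐` with `0 < β < 3/2`, every optimal control has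
finite hitting time; moreover there are `C > 0` and `r₀ > 0` such that for
`dist(x,𝔐) ≤ r₀` the hitting time is at most `(C/(1-2β/3))·dist(x,𝔐)^{3/2-β}`. -/
theorem stmt19 {n : ℕ} (f : Euc n → ℝ) (flo fhi C1 C2 : ℝ)
    (hcont : Continuous f) (hlo : ∀ x, flo ≤ f x) (hhi : ∀ x, f x ≤ fhi)
    (hattain : ∃ x, f x = flo)
    (hlip : ∀ x y : Euc n, |f x - f y| ≤ C1 * dist x y)
    (hsc : ∀ x h : Euc n, f (x + h) + f (x - h) - 2 * f x ≤ C2 * ‖h‖ ^ 2)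
    (γ : ℝ → ℝ)
    (hH : ∀ δ : ℝ, 0 < δ → 0 < γ δ ∧
      γ δ < sInf (lOf f flo '' {y : Euc n | δ < Metric.infDist y (MOf f flo)}))
    (c r β : ℝ) (hc : 0 < c) (hr : 0 < r) (hβ0 : 0 < β) (hβ : β < 3 / 2)
    (hlow : ∀ x : Euc n, Metric.infDist x (MOf f flo) ≤ r →
      c * Metric.infDist x (MOf f flo) ^ β ≤ lOf f flo x) :
    (∀ x : Euc n, ∀ α : ℝ → Euc n, IsOptimal (MOf f flo) (lOf f flo) x α →
      hitTime (MOf f flo) x α ≠ ⊤) ∧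
    ∃ C : ℝ, 0 < C ∧ ∃ r₀ : ℝ, 0 < r₀ ∧
      ∀ x : Euc n, Metric.infDist x (MOf f flo) ≤ r₀ →
        ∀ α : ℝ → Euc n, IsOptimal (MOf f flo) (lOf f flo) x α →
          hitTime (MOf f flo) x α ≤
            ENNReal.ofReal ((C / (1 - 2 * β / 3)) *
              Metric.infDist x (MOf f flo) ^ ((3 : ℝ) / 2 - β)) :=
  stmt19_general f flo C1 hcont hattain hlip γ hH c r β hc hr hβ0 hβ hlow
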